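/- Let y_1, …, y_m be distinct real support nodes and x_1, …, x_{m−1} be real test nodes such that all 2m−1 nodes are pairwise distinct. Let L ∈ ℂ^{(m−1)×m} be the Loewner matrix with entries L_{kj} = (e^{i x_k} − e^{i y_j})/(x_k − y_j), and let w = (w_1, …, w_m) ∈ ℂ^m satisfy L w = 0 and w_j ≠ 0 for all j. Define the polynomials p(x) = Σ_{j=1}^m e^{i y_j} w_j ∏_{k≠j}(x − y_k) and q(x) = Σ_{j=1}^m w_j ∏_{k≠j}(x − y_k), and assume p and q have no common complex root. Then q(x) ≠ 0 for every real x, |p(x)/q(x)| = 1 for every real x, and the rational function p/q interpolates the imaginary exponential at all 2m−1 nodes: p(y_j)/q(y_j) = e^{i y_j} for j = 1, …, m and p(x_k)/q(x_k) = e^{i x_k} for k = 1, …, m−1. -/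

import Mathlib

/-!
Write `q = Σ w_j ℓ_j` and `p = Σ e^{i y_j} w_j ℓ_j` with `ℓ_j = ∏_{k ≠ j} (X - y_k)`. At a support
node only the `j`-th term survives, so `p(y_j) = e^{i y_j} q(y_j)`; at a test node `x_k`,
`p(x_k) - e^{i x_k} q(x_k) = -ℓ(x_k) (L w)_k = 0`. Hence `|p| = |q|` at all `2m - 1` nodes. On the
real line `|p|² - |q|² = p p̄ - q q̄` is the restriction of a polynomial of degree at most `2m - 2`,
which therefore vanishes identically. A real zero of `q` would then be a common zero of `p`
and `q`.
-/

open Polynomial Finset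

namespace Polynomial

section Barycentric

variable {K : Type*} [Field K] {ι : Type*} [Fintype ι] [DecidableEq ι]

/-- The barycentric form `ℓ(X) Σ_j c_j / (X - y_j)` with `ℓ = ∏_k (X - y_k)`, cleared of
denominators. -/
noncomputable def barycentricPoly (y c : ι → K) : K[X] :=
  ∑ j, C (c j) * Lagrange.nodal (univ.erase j) y

theorem eval_barycentricPoly (y c : ι → K) (z : K) :
    (barycentricPoly y c).eval z = ∑ j, c j * ∏ k ∈ univ.erase j, (z - y k) := by
  simp only [barycentricPoly, eval_finsetSum, eval_mul, eval_C, Lagrange.eval_nodal]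

theorem natDegree_barycentricPoly_le (y c : ι → K) :
    (barycentricPoly y c).natDegree ≤ Fintype.card ι - 1 := by
  refine natDegree_sum_le_of_forall_le _ _ fun j _ => natDegree_mul_le.trans ?_
  rw [natDegree_C, Lagrange.natDegree_nodal, card_erase_of_mem (mem_univ j), card_univ,
    zero_add]

theorem eval_barycentricPoly_mul_at_node (y f c : ι → K) (j : ι) :
    (barycentricPoly y (fun i => f i * c i)).eval (y j) = f j * (barycentricPoly y c).eval (y j) := by
  have hvanish : ∀ i ≠ j, ∏ k ∈ univ.erase i, (y j - y k) = 0 := fun i hij =>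
    prod_eq_zero (mem_erase.mpr ⟨hij.symm, mem_univ j⟩) (sub_self _)
  simp only [eval_barycentricPoly]
  rw [sum_eq_single j (fun i _ hij => by rw [hvanish i hij, mul_zero]) (by simp),
    sum_eq_single j (fun i _ hij => by rw [hvanish i hij, mul_zero]) (by simp), mul_assoc]

/-- The hypothesis `hc` says that `c` annihilates the row of the Loewner matrix at `z`. -/
theorem eval_barycentricPoly_mul_of_sum_eq_zero {y : ι → K} {z : K} (hz : ∀ j, z ≠ y j)
    (f : K → K) (c : ι → K) (hc : ∑ j, (f z - f (y j)) / (z - y j) * c j = 0) :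
    (barycentricPoly y (fun i => f (y i) * c i)).eval z = f z * (barycentricPoly y c).eval z := by
  have hterm : ∀ j, f (y j) * c j * ∏ k ∈ univ.erase j, (z - y k)
      - f z * (c j * ∏ k ∈ univ.erase j, (z - y k))
      = -(∏ k, (z - y k)) * ((f z - f (y j)) / (z - y j) * c j) := by
    intro j
    rw [← mul_prod_erase univ (fun k => z - y k) (mem_univ j)]
    field_simp [sub_ne_zero.mpr (hz j)]
    ring
  rw [← sub_eq_zero, eval_barycentricPoly, eval_barycentricPoly, mul_sum, ← sum_sub_distrib,
    sum_congr rfl fun j _ => hterm j, ← mul_sum, hc, mul_zero]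

end Barycentric

theorem eval_ofReal_map_conj (P : ℂ[X]) (t : ℝ) :
    (P.map (starRingEnd ℂ)).eval (t : ℂ) = starRingEnd ℂ (P.eval (t : ℂ)) := by
  rw [eval_map, eval, hom_eval₂, RingHom.comp_id, Complex.conj_ofReal]

/-- `|P|² - |Q|²` agrees on `ℝ` with the polynomial `P P̄ - Q Q̄` of degree at most `2d`, so
equality of moduli at more than `2d` real points propagates to the whole real line. -/
theorem norm_eval_ofReal_eq_of_injective {P Q : ℂ[X]} {d : ℕ} (hP : P.natDegree ≤ d)
    (hQ : Q.natDegree ≤ d) {ι : Type*} [Fintype ι] {v : ι → ℝ} (hv : Function.Injective v)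
    (hcard : 2 * d < Fintype.card ι) (h : ∀ i, ‖P.eval (v i : ℂ)‖ = ‖Q.eval (v i : ℂ)‖)
    (t : ℝ) : ‖P.eval (t : ℂ)‖ = ‖Q.eval (t : ℂ)‖ := by
  set F := P * P.map (starRingEnd ℂ) - Q * Q.map (starRingEnd ℂ)
  have hF : ∀ s : ℝ, F.eval (s : ℂ) = ((‖P.eval (s : ℂ)‖ ^ 2 - ‖Q.eval (s : ℂ)‖ ^ 2 : ℝ) : ℂ) := by
    intro s
    simp only [F, eval_sub, eval_mul, eval_ofReal_map_conj, Complex.mul_conj']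
    push_cast
    rfl
  have hdegF : F.natDegree ≤ 2 * d := by
    refine (natDegree_sub_le _ _).trans (max_le ?_ ?_) <;>
      refine natDegree_mul_le.trans ?_ <;> linarith [natDegree_map_le (f := starRingEnd ℂ) (p := P),
        natDegree_map_le (f := starRingEnd ℂ) (p := Q)]
  have hF0 : F = 0 :=
    eq_zero_of_natDegree_lt_card_of_eval_eq_zero F (Complex.ofReal_injective.comp hv)
      (fun i => by simp only [Function.comp_apply, hF, h i, sub_self, Complex.ofReal_zero])
      (hdegF.trans_lt hcard)
  have hsq : ‖P.eval (t : ℂ)‖ ^ 2 = ‖Q.eval (t : ℂ)‖ ^ 2 := by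
    have := hF t
    rw [hF0, eval_zero, eq_comm, Complex.ofReal_eq_zero, sub_eq_zero] at this
    exact this
  exact (sq_eq_sq₀ (norm_nonneg _) (norm_nonneg _)).mp hsq

end Polynomial

theorem stmt_2 (m : ℕ) (hm : 1 ≤ m)
    (y : Fin m → ℝ) (hy : Function.Injective y)
    (x : Fin (m - 1) → ℝ) (hx : Function.Injective x)
    (hxy : ∀ k j, x k ≠ y j)
    (L : Matrix (Fin (m - 1)) (Fin m) ℂ)
    (hL : ∀ k j, L k j = (Complex.exp (Complex.I * (x k : ℝ)) - Complex.exp (Complex.I * (y j : ℝ)))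
        / (((x k : ℝ) : ℂ) - ((y j : ℝ) : ℂ)))
    (w : Fin m → ℂ) (hw : L.mulVec w = 0)
    (p q : ℂ → ℂ)
    (hp : ∀ z, p z = ∑ j, Complex.exp (Complex.I * (y j : ℝ)) * w j
        * ∏ k ∈ Finset.univ.erase j, (z - ((y k : ℝ) : ℂ)))
    (hq : ∀ z, q z = ∑ j, w j * ∏ k ∈ Finset.univ.erase j, (z - ((y k : ℝ) : ℂ)))
    (hirr : ∀ z : ℂ, ¬(p z = 0 ∧ q z = 0)) :
    (∀ t : ℝ, q (t : ℂ) ≠ 0) ∧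
    (∀ t : ℝ, ‖p (t : ℂ) / q (t : ℂ)‖ = 1) ∧
    (∀ j, p ((y j : ℝ) : ℂ) / q ((y j : ℝ) : ℂ) = Complex.exp (Complex.I * (y j : ℝ))) ∧
    (∀ k, p ((x k : ℝ) : ℂ) / q ((x k : ℝ) : ℂ) = Complex.exp (Complex.I * (x k : ℝ))) := by
  set e : ℂ → ℂ := fun z => Complex.exp (Complex.I * z)
  set Y : Fin m → ℂ := fun j => ((y j : ℝ) : ℂ)
  have hP : ∀ z, p z = (barycentricPoly Y fun j => e (Y j) * w j).eval z := fun z => by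
    rw [hp, eval_barycentricPoly]
  have hQ : ∀ z, q z = (barycentricPoly Y w).eval z := fun z => by rw [hq, eval_barycentricPoly]
  have hpy : ∀ j, p (Y j) = e (Y j) * q (Y j) := fun j => by
    rw [hP, hQ, eval_barycentricPoly_mul_at_node]
  have hpx : ∀ k, p (x k) = e (x k) * q (x k) := fun k => by
    rw [hP, hQ, eval_barycentricPoly_mul_of_sum_eq_zero fun j => Complex.ofReal_injective.ne (hxy k j)]
    simpa [Matrix.mulVec, dotProduct, hL] using congrFun hw k
  have hnorm : ∀ t : ℝ, ‖p t‖ = ‖q t‖ := by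
    intro t
    simp only [hP, hQ]
    refine norm_eval_ofReal_eq_of_injective (natDegree_barycentricPoly_le _ _)
      (natDegree_barycentricPoly_le _ _) (hy.sumElim hx fun j k => (hxy k j).symm) ?_ ?_ t
    · simp only [Fintype.card_sum, Fintype.card_fin]
      omega
    · rintro (j | k)
      · simp only [Sum.elim_inl, ← hP, ← hQ, hpy j, norm_mul, Complex.norm_exp_I_mul_ofReal, e,
          one_mul, Y]
      · simp only [Sum.elim_inr, ← hP, ← hQ, hpx k, norm_mul, Complex.norm_exp_I_mul_ofReal, e,
          one_mul]
  have hq0 : ∀ t : ℝ, q t ≠ 0 := fun t hqt =>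
    hirr t ⟨norm_eq_zero.mp ((hnorm t).trans (norm_eq_zero.mpr hqt)), hqt⟩
  refine ⟨hq0, fun t => ?_, fun j => ?_, fun k => ?_⟩
  · rw [norm_div, hnorm t, div_self (norm_ne_zero_iff.mpr (hq0 t))]
  · rw [hpy j, mul_div_assoc, div_self (hq0 (y j)), mul_one]
  · rw [hpx k, mul_div_assoc, div_self (hq0 (x k)), mul_one]
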